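/- arXiv:1707.05617 — 3 statements merged into one kernel-verified Lean document; each statement's English description precedes it below -/
import Mathlib

section
/- The logic PAFKy (the logic of knowing why extended with public announcements of formulas) is strictly more expressive than the logic ELKy (the basic logic of knowing why) over the class of S5 knowing-why models: PAFKy is at least as expressive as ELKy, but there is a formula of L_{PAFKy} (namely [q]Ky_a p) for which no formula of L_{ELKy} agrees with it on every pointed S5 knowing-why model. -/
/-- The full language: atoms, negation, conjunction, knowledge `K_a`, the
knowing-why operator `Ky_a`, the relativized knowing-why operator `Ky_a^r(·,·)`
and the public announcement operator `[φ]ψ`.  The languages L_{ELKy},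
L_{ELKy^r}, L_{PAFKy} and L_{PAFKy^r} are its evident fragments. -/
inductive Formula (A P : Type) : Type
  | atom : P → Formula A P
  | neg : Formula A P → Formula A P
  | and : Formula A P → Formula A P → Formula A P
  | know : A → Formula A P → Formula A P
  | ky : A → Formula A P → Formula A P
  | kyr : A → Formula A P → Formula A P → Formula A P
  | ann : Formula A P → Formula A P → Formula A P

namespace Formula

/-- Implication, defined as usual: `φ → ψ := ¬(φ ∧ ¬ψ)`. -/
def imp {A P : Type} (φ ψ : Formula A P) : Formula A P := neg (and φ (neg ψ))

/-- Falsum `⊥`, defined as usual from a fixed atom `p₀`: `p₀ ∧ ¬p₀`. -/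
def fls {A P : Type} (p0 : P) : Formula A P := and (atom p0) (neg (atom p0))

/-- Verum `⊤ := ¬⊥`. -/
def tru {A P : Type} (p0 : P) : Formula A P := neg (fls p0)

/-- Membership in the fragment L_{ELKy} (no `Ky^r`, no announcements). -/
def InELKy {A P : Type} : Formula A P → Prop
  | atom _ => True
  | neg φ => φ.InELKy
  | and φ ψ => φ.InELKy ∧ ψ.InELKy
  | know _ φ => φ.InELKy
  | ky _ φ => φ.InELKy
  | kyr _ _ _ => False
  | ann _ _ => False

/-- Membership in the fragment L_{ELKy^r} (no `Ky`, no announcements). -/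
def InELKyr {A P : Type} : Formula A P → Prop
  | atom _ => True
  | neg φ => φ.InELKyr
  | and φ ψ => φ.InELKyr ∧ ψ.InELKyr
  | know _ φ => φ.InELKyr
  | ky _ _ => False
  | kyr _ φ ψ => φ.InELKyr ∧ ψ.InELKyr
  | ann _ _ => False

/-- Membership in the fragment L_{PAFKy} (L_{ELKy} plus announcements). -/
def InPAFKy {A P : Type} : Formula A P → Prop
  | atom _ => True
  | neg φ => φ.InPAFKy
  | and φ ψ => φ.InPAFKy ∧ ψ.InPAFKy
  | know _ φ => φ.InPAFKy
  | ky _ φ => φ.InPAFKy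
  | kyr _ _ _ => False
  | ann φ ψ => φ.InPAFKy ∧ ψ.InPAFKy

/-- Membership in the fragment L_{PAFKy^r} (L_{ELKy^r} plus announcements). -/
def InPAFKyr {A P : Type} : Formula A P → Prop
  | atom _ => True
  | neg φ => φ.InPAFKyr
  | and φ ψ => φ.InPAFKyr ∧ ψ.InPAFKyr
  | know _ φ => φ.InPAFKyr
  | ky _ _ => False
  | kyr _ φ ψ => φ.InPAFKyr ∧ ψ.InPAFKyr
  | ann φ ψ => φ.InPAFKyr ∧ ψ.InPAFKyr

end Formula

/-- A knowing-why model over an ambient type `W` of worlds and a type `ε` of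
explanations: the (current) set `dom ⊆ W` of worlds, a set `E ⊆ ε` of
explanations with designated element `e` and combination operation `comb`,
accessibility relations `R a`, an admissible explanation function `Ef`, and a
valuation `V`.  Keeping the ambient type fixed lets public announcements
restrict `dom`. -/
structure KyModel (A P W ε : Type) where
  dom : Set W
  E : Set ε
  e : ε
  comb : ε → ε → ε
  R : A → W → W → Prop
  Ef : ε → Formula A P → Set W
  V : P → Set W

/-- Well-formedness of a knowing-why model w.r.t. the tautology ground `Λ`:
the set of worlds is nonempty, `e ∈ E`, `E` is closed under combination,
`R_a ⊆ W × W`, `𝓔(e,φ) = W` for every `φ ∈ Λ`, `𝓔(t,φ) ⊆ W`, and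
`𝓔(s,φ→ψ) ∩ 𝓔(t,φ) ⊆ 𝓔(s·t,ψ)`. -/
def KyModel.Wf {A P W ε : Type} (Λ : Set (Formula A P)) (M : KyModel A P W ε) : Prop :=
  M.dom.Nonempty ∧ M.e ∈ M.E ∧
    (∀ s ∈ M.E, ∀ t ∈ M.E, M.comb s t ∈ M.E) ∧
    (∀ a w v, M.R a w v → w ∈ M.dom ∧ v ∈ M.dom) ∧
    (∀ φ ∈ Λ, M.Ef M.e φ = M.dom) ∧
    (∀ t φ, M.Ef t φ ⊆ M.dom) ∧
    (∀ s t φ ψ, M.Ef s (φ.imp ψ) ∩ M.Ef t φ ⊆ M.Ef (M.comb s t) ψ)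

/-- `M` is an S5 model: every `R a` is reflexive (on the worlds of `M`),
transitive and symmetric. -/
def KyModel.S5 {A P W ε : Type} (M : KyModel A P W ε) : Prop :=
  ∀ a, (∀ w ∈ M.dom, M.R a w w) ∧ (∀ w u v, M.R a w u → M.R a u v → M.R a w v) ∧
    (∀ w v, M.R a w v → M.R a v w)

/-- The updated model after the public announcement of a formula whose
extension is `S`: the worlds are restricted to `W' = dom ∩ S`, and `R`, `𝓔`
and `V` are restricted accordingly (`E` is unchanged). -/
def KyModel.update {A P W ε : Type} (M : KyModel A P W ε) (S : Set W) :
    KyModel A P W ε where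
  dom := M.dom ∩ S
  E := M.E
  e := M.e
  comb := M.comb
  R := fun a w v => M.R a w v ∧ w ∈ M.dom ∩ S ∧ v ∈ M.dom ∩ S
  Ef := fun t φ => M.Ef t φ ∩ (M.dom ∩ S)
  V := fun p => M.V p ∩ (M.dom ∩ S)

/-- Satisfaction.  In particular:
`(M,w) ⊨ Ky_aφ` iff `(M,w) ⊨ K_aφ` and some `t ∈ E` has `v ∈ 𝓔(t,φ)` for every
accessible `v`; `(M,w) ⊨ Ky_a^r(φ,ψ)` iff some `t ∈ E` has `v ∈ 𝓔(t,ψ)` and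
`(M,v) ⊨ ψ` for every accessible `v` with `(M,v) ⊨ φ`; and `(M,w) ⊨ [φ]ψ` iff
`(M,w) ⊨ φ` implies `(M|φ,w) ⊨ ψ`. -/
def Sat {A P W ε : Type} : KyModel A P W ε → W → Formula A P → Prop
  | M, w, .atom p => w ∈ M.V p
  | M, w, .neg φ => ¬ Sat M w φ
  | M, w, .and φ ψ => Sat M w φ ∧ Sat M w ψ
  | M, w, .know a φ => ∀ v ∈ M.dom, M.R a w v → Sat M v φ
  | M, w, .ky a φ => (∀ v ∈ M.dom, M.R a w v → Sat M v φ) ∧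
      (∃ t ∈ M.E, ∀ v ∈ M.dom, M.R a w v → v ∈ M.Ef t φ)
  | M, w, .kyr a φ ψ => ∃ t ∈ M.E, ∀ v ∈ M.dom, M.R a w v → Sat M v φ →
      v ∈ M.Ef t ψ ∧ Sat M v ψ
  | M, w, .ann φ ψ => Sat M w φ → Sat (M.update {v | Sat M v φ}) w ψ

/-- The factive companion `M^F` of `M`: the same model, except that
`𝓔^F(t,φ) = 𝓔(t,φ) \ {w ∈ W : (M,w) ⊭ φ}`. -/
def KyModel.factive {A P W ε : Type} (M : KyModel A P W ε) : KyModel A P W ε :=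
  { M with Ef := fun t φ => M.Ef t φ \ {w ∈ M.dom | ¬ Sat M w φ} }

/-- `L1` is at least as expressive as `L2` (over pointed S5 knowing-why models
with tautology ground `Λ`): every `L2`-formula has an equivalent `L1`-formula. -/
def AtLeastAsExpressive {A P : Type} (Λ : Set (Formula A P))
    (L1 L2 : Formula A P → Prop) : Prop :=
  ∀ φ : Formula A P, L2 φ → ∃ ψ : Formula A P, L1 ψ ∧
    ∀ (W ε : Type) (M : KyModel A P W ε), M.Wf Λ → M.S5 → ∀ w ∈ M.dom,
      (Sat M w φ ↔ Sat M w ψ)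


section Aux

variable {A P : Type}

lemma elky_to_pafky : ∀ φ : Formula A P, φ.InELKy → φ.InPAFKy
  | .atom _, _ => trivial
  | .neg φ, h => elky_to_pafky φ h
  | .and φ ψ, h => ⟨elky_to_pafky φ h.1, elky_to_pafky ψ h.2⟩
  | .know _ φ, h => elky_to_pafky φ h
  | .ky _ φ, h => elky_to_pafky φ h
  | .kyr _ _ _, h => h.elim
  | .ann _ _, h => h.elim

/-- Derivations of explanations in the counterexample models. -/
inductive Pf (Λ : Set (Formula A P)) (p : P) (extra : Bool) :
    Bool → Formula A P → Bool → Prop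
  | base : ∀ χ ∈ Λ, ∀ w, Pf Λ p extra true χ w
  | extra_rule : extra = true → Pf Λ p extra false (Formula.atom p) true
  | mp : ∀ s t φ ψ w, Pf Λ p extra s (φ.imp ψ) w → Pf Λ p extra t φ w →
      Pf Λ p extra true ψ w

/-- The counterexample model. -/
def Mdl (Λ : Set (Formula A P)) (p q : P) (extra : Bool) : KyModel A P Bool Bool where
  dom := Set.univ
  E := Set.univ
  e := true
  comb := fun _ _ => true
  R := fun _ _ _ => True
  Ef := fun t φ => {w | Pf Λ p extra t φ w}
  V := fun r => {w | r = q → w = true}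

/-- The trivial one-point model. -/
def Triv (A P : Type) : KyModel A P Unit Unit where
  dom := Set.univ
  E := Set.univ
  e := ()
  comb := fun _ _ => ()
  R := fun _ _ _ => True
  Ef := fun _ _ => Set.univ
  V := fun _ => ∅

lemma triv_wf (Λ : Set (Formula A P)) : (Triv A P).Wf Λ := by
  refine ⟨⟨(), trivial⟩, trivial, fun _ _ _ _ => trivial, fun _ _ _ _ => ⟨trivial, trivial⟩,
    fun _ _ => rfl, fun _ _ _ _ => trivial, fun _ _ _ _ => ?_⟩
  intro x _; trivial

lemma triv_s5 : (Triv A P).S5 := by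
  intro a
  exact ⟨fun _ _ => trivial, fun _ _ _ _ _ => trivial, fun _ _ _ => trivial⟩

lemma pf_mono {Λ : Set (Formula A P)} {p : P} {extra : Bool} {t φ w}
    (h : Pf Λ p false t φ w) : Pf Λ p extra t φ w := by
  induction h with
  | base χ hχ w => exact Pf.base χ hχ w
  | extra_rule h => cases h
  | mp s t φ ψ w _ _ ih1 ih2 => exact Pf.mp s t φ ψ w ih1 ih2

lemma pf_false_world {Λ : Set (Formula A P)} {p : P} {extra : Bool} {t φ w}
    (h : Pf Λ p extra t φ w) (hw : w = false) : Pf Λ p false t φ false := by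
  induction h with
  | base χ hχ w => exact Pf.base χ hχ false
  | extra_rule h => cases hw
  | mp s t φ ψ w h1 h2 ih1 ih2 =>
      exact Pf.mp s t φ ψ false (ih1 hw) (ih2 hw)

lemma pf_false_uniform {Λ : Set (Formula A P)} {p : P} {t φ w} (w' : Bool)
    (h : Pf Λ p false t φ w) : Pf Λ p false t φ w' := by
  induction h with
  | base χ hχ w => exact Pf.base χ hχ w'
  | extra_rule h => cases h
  | mp s t φ ψ w _ _ ih1 ih2 => exact Pf.mp s t φ ψ w' ih1 ih2

/-- Soundness of non-extra derivations in the trivial model. -/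
lemma pf_sound {Λ : Set (Formula A P)} {p : P}
    (hΛ : ∀ χ ∈ Λ, Sat (Triv A P) () χ) {t φ w}
    (h : Pf Λ p false t φ w) : Sat (Triv A P) () φ := by
  induction h with
  | base χ hχ w => exact hΛ χ hχ
  | extra_rule h => cases h
  | mp s t φ ψ w _ _ ih1 ih2 =>
      have h1 : ¬ (Sat (Triv A P) () φ ∧ ¬ Sat (Triv A P) () ψ) := ih1
      by_contra hψ
      exact h1 ⟨ih2, hψ⟩

lemma mdl_wf (Λ : Set (Formula A P)) (p q : P) (extra : Bool) :
    (Mdl Λ p q extra).Wf Λ := by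
  refine ⟨⟨true, trivial⟩, trivial, fun _ _ _ _ => trivial,
    fun _ _ _ _ => ⟨trivial, trivial⟩, ?_, fun _ _ _ _ => trivial, ?_⟩
  · intro φ hφ
    ext w
    simp only [Mdl, Set.mem_univ, iff_true, Set.mem_setOf_eq]
    exact Pf.base φ hφ w
  · rintro s t φ ψ x ⟨h1, h2⟩
    exact Pf.mp s t φ ψ x h1 h2

lemma mdl_s5 (Λ : Set (Formula A P)) (p q : P) (extra : Bool) :
    (Mdl Λ p q extra).S5 := by
  intro a
  exact ⟨fun _ _ => trivial, fun _ _ _ _ _ => trivial, fun _ _ _ => trivial⟩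

/-- ELKy-formulas cannot distinguish the two counterexample models. -/
lemma elky_invariance (Λ : Set (Formula A P)) (p q : P) :
    ∀ φ : Formula A P, φ.InELKy → ∀ w,
      (Sat (Mdl Λ p q true) w φ ↔ Sat (Mdl Λ p q false) w φ) := by
  intro φ
  induction φ with
  | atom r => intro _ w; exact Iff.rfl
  | neg φ ih => intro h w; exact not_congr (ih h w)
  | and φ ψ ih1 ih2 => intro h w; exact and_congr (ih1 h.1 w) (ih2 h.2 w)
  | know a φ ih =>
      intro h w
      constructor
      · intro hk v hv hr; exact (ih h v).1 (hk v hv hr)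
      · intro hk v hv hr; exact (ih h v).2 (hk v hv hr)
  | ky a φ ih =>
      intro h w
      simp only [Sat]
      constructor
      · rintro ⟨h1, t, _, h2⟩
        refine ⟨fun v hv hr => (ih h v).1 (h1 v hv hr), t, trivial, ?_⟩
        intro v hv hr
        have hf : Pf Λ p true t φ false := h2 false trivial trivial
        exact pf_false_uniform v (pf_false_world hf rfl)
      · rintro ⟨h1, t, _, h2⟩
        refine ⟨fun v hv hr => (ih h v).2 (h1 v hv hr), t, trivial, ?_⟩
        intro v hv hr
        exact pf_mono (h2 v hv hr)
  | kyr a φ ψ ih1 ih2 => intro h; exact h.elim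
  | ann φ ψ ih1 ih2 => intro h; exact h.elim

/-- The separating formula holds at (Mdl true, true). -/
lemma sep_true (Λ : Set (Formula A P)) {p q : P} (hpq : p ≠ q) (a : A) :
    Sat (Mdl Λ p q true) true
      (Formula.ann (Formula.atom q) (Formula.ky a (Formula.atom p))) := by
  intro hq
  constructor
  · rintro v ⟨_, hv⟩ hr
    show v ∈ _
    exact ⟨fun h => absurd h hpq, trivial, hv⟩
  · refine ⟨false, trivial, ?_⟩
    rintro v ⟨_, hv⟩ hr
    have hv' : v = true := hv rfl
    subst hv'
    exact ⟨Pf.extra_rule rfl, trivial, hv⟩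

/-- The separating formula fails at (Mdl false, true). -/
lemma sep_false (Λ : Set (Formula A P)) {p q : P}
    (hΛ : ∀ χ ∈ Λ, Sat (Triv A P) () χ) (a : A) :
    ¬ Sat (Mdl Λ p q false) true
      (Formula.ann (Formula.atom q) (Formula.ky a (Formula.atom p))) := by
  intro hsat
  have hq : Sat (Mdl Λ p q false) true (Formula.atom q) := fun _ => rfl
  obtain ⟨_, t, _, h2⟩ := hsat hq
  have hmem : (true : Bool) ∈ Set.univ ∩ {v | Sat (Mdl Λ p q false) v (Formula.atom q)} :=
    ⟨trivial, hq⟩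
  have := h2 true hmem ⟨trivial, hmem, hmem⟩
  have hpf : Pf Λ p false t (Formula.atom p) true := this.1
  have := pf_sound hΛ hpf
  exact this

end Aux

/-- PAFKy is strictly more expressive than ELKy over S5
knowing-why models: PAFKy is at least as expressive as ELKy, but there is a
formula of L_{PAFKy} — namely `[q]Ky_a p` — for which no formula of L_{ELKy}
agrees with it on every pointed S5 knowing-why model.  (The tautology ground
`Λ` consists of valid formulas.) -/
theorem pafky_strictly_more_expressive_than_elky {A P : Type}
    [Countable A] [Nonempty A] [Countable P] [Infinite P]
    (Λ : Set (Formula A P))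
    (hΛ : ∀ χ ∈ Λ, ∀ (W ε : Type) (M : KyModel A P W ε), M.Wf Λ → M.S5 →
      ∀ w ∈ M.dom, Sat M w χ) :
    AtLeastAsExpressive Λ Formula.InPAFKy Formula.InELKy ∧
    (∃ (p q : P) (a : A), p ≠ q ∧
      ∀ ψ : Formula A P, ψ.InELKy →
        ¬ ∀ (W ε : Type) (M : KyModel A P W ε), M.Wf Λ → M.S5 → ∀ w ∈ M.dom,
          (Sat M w (Formula.ann (Formula.atom q) (Formula.ky a (Formula.atom p))) ↔
            Sat M w ψ)) := by
  constructor
  · intro φ hφ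
    exact ⟨φ, elky_to_pafky φ hφ, fun _ _ _ _ _ _ _ => Iff.rfl⟩
  · obtain ⟨p, q, hpq⟩ : ∃ p q : P, p ≠ q := by
      obtain ⟨p, q, h⟩ := exists_pair_ne P
      exact ⟨p, q, h⟩
    obtain ⟨a⟩ := (inferInstance : Nonempty A)
    refine ⟨p, q, a, hpq, ?_⟩
    intro ψ hψ H
    have hΛtriv : ∀ χ ∈ Λ, Sat (Triv A P) () χ := fun χ hχ =>
      hΛ χ hχ Unit Unit (Triv A P) (triv_wf Λ) triv_s5 () trivial
    have h1 := H Bool Bool (Mdl Λ p q true) (mdl_wf Λ p q true) (mdl_s5 Λ p q true)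
      true trivial
    have h2 := H Bool Bool (Mdl Λ p q false) (mdl_wf Λ p q false) (mdl_s5 Λ p q false)
      true trivial
    have hψ1 : Sat (Mdl Λ p q true) true ψ := h1.1 (sep_true Λ hpq a)
    have hψ2 : Sat (Mdl Λ p q false) true ψ := (elky_invariance Λ p q ψ hψ true).1 hψ1
    exact sep_false Λ hΛtriv a (h2.2 hψ2)
end

section
/- Failure of factivity neutrality for PAFKy: there exist a formula φ of L_{PAFKy} (namely [p]Ky_aK_aq), a knowing-why model M and a world w of M such that (M,w) ⊨ φ but (M^F,w) ⊭ φ, where M^F is the factive companion of M. -/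
/-- Failure of factivity neutrality for PAFKy: there exist a
formula of L_{PAFKy} — namely `[p]Ky_aK_aq` —, a knowing-why model M and a
world w of M such that `(M,w) ⊨ φ` but `(M^F,w) ⊭ φ`. -/
theorem pafky_not_factivity_neutral {A P : Type}
    [Countable A] [Nonempty A] [Countable P] [Infinite P]
    (Λ : Set (Formula A P)) :
    ∃ (W ε : Type) (M : KyModel A P W ε) (w : W) (p q : P) (a : A),
      p ≠ q ∧ M.Wf Λ ∧ w ∈ M.dom ∧
      Sat M w (Formula.ann (Formula.atom p) (Formula.ky a (Formula.know a (Formula.atom q)))) ∧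
      ¬ Sat M.factive w
          (Formula.ann (Formula.atom p) (Formula.ky a (Formula.know a (Formula.atom q)))) := by
  obtain ⟨p, q, hpq⟩ := exists_pair_ne P
  obtain ⟨a⟩ := ‹Nonempty A›
  let M : KyModel A P Bool Unit := ⟨Set.univ, Set.univ, (), fun _ _ => (),
    fun _ _ _ => True, fun _ _ => Set.univ, fun _ => {true}⟩
  refine ⟨Bool, Unit, M, true, p, q, a, hpq, ?_, trivial, ?_, ?_⟩
  · exact ⟨⟨true, trivial⟩, trivial, fun _ _ _ _ => trivial,
      fun _ _ _ _ => ⟨trivial, trivial⟩, fun _ _ => rfl, fun _ _ _ _ => trivial,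
      fun _ _ _ _ _ _ => trivial⟩
  · intro _
    refine ⟨?_, ⟨(), trivial, fun v hv _ => ⟨trivial, hv⟩⟩⟩
    intro v hv _ u hu _
    exact ⟨hu.2, trivial, hu.2⟩
  · intro h
    obtain ⟨_, t, _, ht⟩ := h rfl
    have h1 : (true : Bool) ∈ (Set.univ ∩
        {v : Bool | Sat M.factive v (Formula.atom p)}) := ⟨trivial, rfl⟩
    obtain ⟨⟨_, hne⟩, _⟩ := ht true h1 ⟨trivial, h1, h1⟩
    apply hne
    refine ⟨trivial, ?_⟩
    intro hk
    have := hk false trivial trivial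
    simp [Sat, M] at this
end

section
/- The logics PAFKy and ELKy^r are not equally expressive over the class of S5 knowing-why models; consequently, PAFKy^r (the language L_{ELKy^r} extended with the public announcement operator [φ]ψ) is strictly more expressive than ELKy^r: ELKy^r is a fragment of PAFKy^r, but there is a formula of L_{PAFKy^r} for which no formula of L_{ELKy^r} agrees with it on every pointed S5 knowing-why model. -/
section Aux

/-- The trivial two-world model on `Bool` with unit explanations. -/
def trivM (A P : Type) : KyModel A P Bool Unit where
  dom := Set.univ
  E := Set.univ
  e := ()
  comb := fun _ _ => ()
  R := fun _ _ _ => True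
  Ef := fun _ _ => Set.univ
  V := fun _ => {true}

lemma trivM_wf {A P : Type} (Λ : Set (Formula A P)) : (trivM A P).Wf Λ := by
  refine ⟨⟨true, trivial⟩, trivial, fun _ _ _ _ => trivial,
    fun _ _ _ _ => ⟨trivial, trivial⟩, fun _ _ => rfl, fun _ _ _ _ => trivial,
    fun _ _ _ _ _ _ => trivial⟩

lemma trivM_s5 {A P : Type} : (trivM A P).S5 :=
  fun _ => ⟨fun _ _ => trivial, fun _ _ _ _ _ => trivial, fun _ _ _ => trivial⟩

lemma mem_factive_Ef {A P : Type} (t : Unit) (φ : Formula A P) (x : Bool) :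
    x ∈ (trivM A P).factive.Ef t φ ↔ Sat (trivM A P) x φ := by
  simp [KyModel.factive, trivM, Set.mem_diff, Set.mem_setOf_eq, not_not]

lemma factive_wf {A P : Type} (Λ : Set (Formula A P))
    (hΛ : ∀ χ ∈ Λ, ∀ (W ε : Type) (M : KyModel A P W ε), M.Wf Λ → M.S5 →
      ∀ w ∈ M.dom, Sat M w χ) : (trivM A P).factive.Wf Λ := by
  refine ⟨⟨true, trivial⟩, trivial, fun _ _ _ _ => trivial,
    fun _ _ _ _ => ⟨trivial, trivial⟩, ?_, fun _ _ _ _ => trivial, ?_⟩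
  · intro φ hφ
    apply Set.eq_univ_of_forall
    intro x
    exact (mem_factive_Ef _ φ x).mpr
      (hΛ φ hφ Bool Unit (trivM A P) (trivM_wf Λ) trivM_s5 x trivial)
  · intro s t φ ψ x hx
    have h1 := (mem_factive_Ef s (φ.imp ψ) x).mp hx.1
    have h2 := (mem_factive_Ef t φ x).mp hx.2
    refine (mem_factive_Ef _ ψ x).mpr ?_
    simp only [Formula.imp, Sat] at h1
    by_contra hc
    exact h1 ⟨h2, hc⟩

lemma triv_invar {A P : Type} (φ : Formula A P) (h : φ.InELKyr) (x : Bool) :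
    Sat (trivM A P) x φ ↔ Sat (trivM A P).factive x φ := by
  induction φ generalizing x with
  | atom p => exact Iff.rfl
  | neg φ ih => exact not_congr (ih h x)
  | and φ ψ ihφ ihψ => exact and_congr (ihφ h.1 x) (ihψ h.2 x)
  | know a φ ih =>
      exact forall_congr' fun v => forall_congr' fun _ => forall_congr' fun _ => ih h v
  | ky a φ ih => exact h.elim
  | kyr a φ ψ ihφ ihψ =>
      obtain ⟨h1, h2⟩ := h
      constructor
      · rintro ⟨t, -, ht⟩
        refine ⟨t, trivial, fun v hv hr hφv => ?_⟩
        have hs := ht v hv hr ((ihφ h1 v).mpr hφv)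
        exact ⟨(mem_factive_Ef t ψ v).mpr hs.2, (ihψ h2 v).mp hs.2⟩
      · rintro ⟨t, -, ht⟩
        refine ⟨t, trivial, fun v hv hr hφv => ?_⟩
        have hs := ht v hv hr ((ihφ h1 v).mp hφv)
        exact ⟨trivial, (ihψ h2 v).mpr hs.2⟩
  | ann φ ψ _ _ => exact h.elim

lemma elkyr_sub_pafkyr {A P : Type} (φ : Formula A P) (h : φ.InELKyr) :
    φ.InPAFKyr := by
  induction φ with
  | atom => trivial
  | neg _ ih => exact ih h
  | and _ _ ih1 ih2 => exact ⟨ih1 h.1, ih2 h.2⟩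
  | know _ _ ih => exact ih h
  | ky => exact h.elim
  | kyr _ _ _ ih1 ih2 => exact ⟨ih1 h.1, ih2 h.2⟩
  | ann => exact h.elim

lemma sat_chi1 {A P : Type} (a : A) (p : P) :
    Sat (trivM A P) true (.ann (.atom p) (.ky a (.know a (.atom p)))) := by
  intro _
  refine ⟨fun v hv _ u hu _ => ⟨hu.2, hu⟩, (), trivial, fun v hv _ => ⟨trivial, hv⟩⟩

lemma notsat_chi1 {A P : Type} (a : A) (p : P) :
    ¬ Sat (trivM A P).factive true (.ann (.atom p) (.ky a (.know a (.atom p)))) := by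
  intro h
  have hp : Sat (trivM A P).factive true (.atom p) := rfl
  obtain ⟨-, t, -, ht⟩ := h hp
  have hm : (true : Bool) ∈ Set.univ ∩ {v | Sat (trivM A P).factive v (.atom p)} :=
    ⟨trivial, hp⟩
  have hmem := ht true hm ⟨trivial, hm, hm⟩
  have h3 := (mem_factive_Ef t (.know a (.atom p)) true).mp hmem.1
  have h4 := h3 false trivial trivial
  simp [trivM, Sat] at h4

lemma sat_chi2 {A P : Type} (a : A) (p : P) :
    Sat (trivM A P) true
      (.ann (.atom p) (.kyr a (Formula.tru p) (.know a (.atom p)))) := by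
  intro _
  exact ⟨(), trivial, fun v hv _ _ => ⟨⟨trivial, hv⟩, fun u hu _ => ⟨hu.2, hu⟩⟩⟩

lemma notsat_chi2 {A P : Type} (a : A) (p : P) :
    ¬ Sat (trivM A P).factive true
      (.ann (.atom p) (.kyr a (Formula.tru p) (.know a (.atom p)))) := by
  intro h
  have hp : Sat (trivM A P).factive true (.atom p) := rfl
  obtain ⟨t, -, ht⟩ := h hp
  have hm : (true : Bool) ∈ Set.univ ∩ {v | Sat (trivM A P).factive v (.atom p)} :=
    ⟨trivial, hp⟩
  have htru : Sat ((trivM A P).factive.update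
      {v | Sat (trivM A P).factive v (.atom p)}) true (Formula.tru p) :=
    fun hc => hc.2 hc.1
  have hmem := ht true hm ⟨trivial, hm, hm⟩ htru
  have h3 := (mem_factive_Ef t (.know a (.atom p)) true).mp hmem.1.1
  have h4 := h3 false trivial trivial
  simp [trivM, Sat] at h4

end Aux

/-- PAFKy and ELKy^r are not equally expressive over S5
knowing-why models; consequently PAFKy^r is strictly more expressive than
ELKy^r: ELKy^r is a fragment of PAFKy^r (so PAFKy^r is at least as expressive),
but some formula of L_{PAFKy^r} has no equivalent formula of L_{ELKy^r} over
all pointed S5 knowing-why models.  (The tautology ground `Λ` consists of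
valid formulas.) -/
theorem pafkyr_strictly_more_expressive_than_elkyr {A P : Type}
    [Countable A] [Nonempty A] [Countable P] [Infinite P]
    (Λ : Set (Formula A P))
    (hΛ : ∀ χ ∈ Λ, ∀ (W ε : Type) (M : KyModel A P W ε), M.Wf Λ → M.S5 →
      ∀ w ∈ M.dom, Sat M w χ) :
    (¬ (AtLeastAsExpressive Λ Formula.InPAFKy Formula.InELKyr ∧
        AtLeastAsExpressive Λ Formula.InELKyr Formula.InPAFKy)) ∧
    AtLeastAsExpressive Λ Formula.InPAFKyr Formula.InELKyr ∧
    ¬ AtLeastAsExpressive Λ Formula.InELKyr Formula.InPAFKyr := by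
  obtain ⟨a⟩ := ‹Nonempty A›
  have : Nonempty P := inferInstance
  obtain ⟨p⟩ := this
  have key1 : ¬ AtLeastAsExpressive Λ Formula.InELKyr Formula.InPAFKy := by
    intro hale
    obtain ⟨ψ, hψ, hiff⟩ :=
      hale (.ann (.atom p) (.ky a (.know a (.atom p)))) ⟨trivial, trivial⟩
    have e1 := (hiff Bool Unit (trivM A P) (trivM_wf Λ) trivM_s5 true trivial).mp
      (sat_chi1 a p)
    have e2 := (hiff Bool Unit (trivM A P).factive (factive_wf Λ hΛ) (trivM_s5 (A := A) (P := P))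
      true trivial).mpr ((triv_invar ψ hψ true).mp e1)
    exact notsat_chi1 a p e2
  have key3 : ¬ AtLeastAsExpressive Λ Formula.InELKyr Formula.InPAFKyr := by
    intro hale
    obtain ⟨ψ, hψ, hiff⟩ :=
      hale (.ann (.atom p) (.kyr a (Formula.tru p) (.know a (.atom p))))
        ⟨trivial, ⟨⟨trivial, trivial⟩, trivial⟩⟩
    have e1 := (hiff Bool Unit (trivM A P) (trivM_wf Λ) trivM_s5 true trivial).mp
      (sat_chi2 a p)
    have e2 := (hiff Bool Unit (trivM A P).factive (factive_wf Λ hΛ) (trivM_s5 (A := A) (P := P))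
      true trivial).mpr ((triv_invar ψ hψ true).mp e1)
    exact notsat_chi2 a p e2
  refine ⟨fun h => key1 h.2, ?_, key3⟩
  intro φ hφ
  exact ⟨φ, elkyr_sub_pafkyr φ hφ, fun _ _ _ _ _ _ _ => Iff.rfl⟩
end
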